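/- For the set X = ℤ^d ∪ ((1/2,…,1/2) + ℤ^d) with d ≥ 5 and any x ∈ X, the set M_x of 1-reachable points (a translate of ℤ^d) is full-dimensional, i.e., its affine hull is all of ℝ^d, yet M_x ≠ X. -/

import Mathlib

/-- `y` is `t`-reachable from `x` within `X`. -/
def Reachable (d : ℕ) (X : Set (EuclideanSpace ℝ (Fin d))) (t : ℝ)
    (x y : EuclideanSpace ℝ (Fin d)) : Prop :=
  ∃ (m : ℕ) (c : ℕ → EuclideanSpace ℝ (Fin d)),
    c 0 = x ∧ c m = y ∧ (∀ i ≤ m, c i ∈ X) ∧ ∀ i < m, dist (c (i + 1)) (c i) ≤ t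

/-- The integer lattice `ℤ^d` inside `ℝ^d`. -/
def IntLattice (d : ℕ) : Set (EuclideanSpace ℝ (Fin d)) :=
  {v | ∀ i, ∃ n : ℤ, v i = n}

/-- The vector `(1/2, …, 1/2) ∈ ℝ^d`. -/
noncomputable def halfVec (d : ℕ) : EuclideanSpace ℝ (Fin d) := WithLp.toLp 2 (fun _ => 1 / 2)

/-- The set `X = ℤ^d ∪ ((1/2, …, 1/2) + ℤ^d)` in `ℝ^d`. -/
def halfIntSet (d : ℕ) : Set (EuclideanSpace ℝ (Fin d)) :=
  IntLattice d ∪ {v | ∃ w ∈ IntLattice d, v = halfVec d + w}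

/-!
`X` is the union of the two cosets `ℤ^d` and `(1/2,…,1/2) + ℤ^d`. Two points in different cosets
differ by a vector all of whose coordinates lie in `ℤ + 1/2`, so they are at distance at least
`√d / 2 > 1` once `d ≥ 5`. Hence every step of length `≤ 1` stays in one coset and
`M_x ⊆ x + ℤ^d`, which misses the point `x + (1/2,…,1/2)` of `X`. On the other hand the unit
steps `x → x + eᵢ` stay in `X`, so `M_x` contains `x` and all `x + eᵢ`, whose affine span is `ℝ^d`.
-/

theorem affineSpan_eq_top_of_vadd_basis_mem {k V P ι : Type*} [Ring k] [AddCommGroup V]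
    [Module k V] [AddTorsor V P] {s : Set P} {p : P} (b : Module.Basis ι k V) (hp : p ∈ s)
    (hb : ∀ i, b i +ᵥ p ∈ s) : affineSpan k s = ⊤ := by
  rw [AffineSubspace.affineSpan_eq_top_iff_vectorSpan_eq_top_of_nonempty k V P ⟨p, hp⟩, eq_top_iff,
    ← b.span_eq, Submodule.span_le]
  rintro _ ⟨i, rfl⟩
  simpa using vsub_mem_vectorSpan k (hb i) hp

namespace Reachable

variable {d : ℕ} {X : Set (EuclideanSpace ℝ (Fin d))} {t : ℝ} {x y : EuclideanSpace ℝ (Fin d)}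

theorem refl (hx : x ∈ X) : Reachable d X t x x :=
  ⟨0, fun _ => x, rfl, rfl, fun _ _ => hx, fun _ h => absurd h (Nat.not_lt_zero _)⟩

theorem of_dist_le (hx : x ∈ X) (hy : y ∈ X) (h : dist y x ≤ t) : Reachable d X t x y := by
  refine ⟨1, fun i => if i = 0 then x else y, rfl, rfl, fun i _ => ?_, fun i hi => ?_⟩
  · dsimp only
    split_ifs <;> assumption
  · obtain rfl : i = 0 := Nat.lt_one_iff.mp hi
    simpa using h

theorem sub_mem {G : AddSubgroup (EuclideanSpace ℝ (Fin d))}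
    (hstep : ∀ y ∈ X, ∀ z ∈ X, dist z y ≤ t → z - y ∈ G) (h : Reachable d X t x y) :
    y - x ∈ G := by
  obtain ⟨m, c, rfl, rfl, hmem, hdist⟩ := h
  suffices ∀ i ≤ m, c i - c 0 ∈ G from this m le_rfl
  intro i hi
  induction i with
  | zero => simp
  | succ i ih =>
    have hi' : i < m := hi
    have hc : c (i + 1) - c 0 = (c (i + 1) - c i) + (c i - c 0) := by abel
    rw [hc]
    exact G.add_mem (hstep _ (hmem i hi'.le) _ (hmem _ hi) (hdist i hi')) (ih hi'.le)

end Reachable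

def intLatticeAddSubgroup (d : ℕ) : AddSubgroup (EuclideanSpace ℝ (Fin d)) where
  carrier := IntLattice d
  add_mem' {a b} ha hb i := by
    obtain ⟨m, hm⟩ := ha i
    obtain ⟨n, hn⟩ := hb i
    exact ⟨m + n, by simp [hm, hn]⟩
  zero_mem' _ := ⟨0, by simp⟩
  neg_mem' {a} ha i := by
    obtain ⟨m, hm⟩ := ha i
    exact ⟨-m, by simp [hm]⟩

local notation "L" => intLatticeAddSubgroup

theorem single_one_mem_intLatticeAddSubgroup {d : ℕ} (i : Fin d) :
    EuclideanSpace.single i (1 : ℝ) ∈ L d := fun j =>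
  ⟨if j = i then 1 else 0, by rw [PiLp.single_apply]; split_ifs <;> simp⟩

theorem halfVec_add_halfVec_mem_intLatticeAddSubgroup (d : ℕ) : halfVec d + halfVec d ∈ L d :=
  fun _ => ⟨1, by norm_num [halfVec]⟩

theorem halfVec_notMem_intLatticeAddSubgroup {d : ℕ} (hd : 0 < d) : halfVec d ∉ L d := by
  intro h
  obtain ⟨n, hn⟩ := h ⟨0, hd⟩
  have : (2 * n : ℝ) = 1 := by rw [← hn]; norm_num [halfVec]
  have : 2 * n = 1 := by exact_mod_cast this
  omega

theorem mem_halfIntSet_iff {d : ℕ} {v : EuclideanSpace ℝ (Fin d)} :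
    v ∈ halfIntSet d ↔ v ∈ L d ∨ v - halfVec d ∈ L d := by
  refine or_congr Iff.rfl ⟨?_, fun h => ⟨_, h, by abel⟩⟩
  rintro ⟨w, hw, rfl⟩
  rwa [add_sub_cancel_left]

theorem add_mem_halfIntSet {d : ℕ} {v w : EuclideanSpace ℝ (Fin d)} (hv : v ∈ halfIntSet d)
    (hw : w ∈ L d) : v + w ∈ halfIntSet d := by
  rw [mem_halfIntSet_iff] at hv ⊢
  rw [add_sub_right_comm]
  exact hv.imp (add_mem · hw) (add_mem · hw)

theorem add_halfVec_mem_halfIntSet {d : ℕ} {v : EuclideanSpace ℝ (Fin d)}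
    (hv : v ∈ halfIntSet d) : v + halfVec d ∈ halfIntSet d := by
  rw [mem_halfIntSet_iff] at hv ⊢
  rcases hv with hv | hv
  · exact Or.inr (by simpa using hv)
  · refine Or.inl ?_
    rw [show v + halfVec d = (v - halfVec d) + (halfVec d + halfVec d) by abel]
    exact add_mem hv (halfVec_add_halfVec_mem_intLatticeAddSubgroup d)

theorem sub_mem_or_sub_halfVec_mem {d : ℕ} {y z : EuclideanSpace ℝ (Fin d)}
    (hy : y ∈ halfIntSet d) (hz : z ∈ halfIntSet d) :
    z - y ∈ L d ∨ z - y - halfVec d ∈ L d := by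
  rw [mem_halfIntSet_iff] at hy hz
  rcases hy with hy | hy <;> rcases hz with hz | hz
  · exact Or.inl (sub_mem hz hy)
  · exact Or.inr (by simpa [sub_right_comm] using sub_mem hz hy)
  · refine Or.inr ?_
    rw [show z - y - halfVec d = z - (y - halfVec d) - (halfVec d + halfVec d) by abel]
    exact sub_mem (sub_mem hz hy) (halfVec_add_halfVec_mem_intLatticeAddSubgroup d)
  · exact Or.inl (by simpa using sub_mem hz hy)

theorem one_div_four_le_sq_int_add_half (n : ℤ) : 1 / 4 ≤ ((n : ℝ) + 1 / 2) ^ 2 := by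
  have h : (0 : ℤ) ≤ n * (n + 1) := by rcases le_or_gt 0 n with hn | hn <;> nlinarith
  have h' : (0 : ℝ) ≤ n * (n + 1) := by exact_mod_cast h
  nlinarith

theorem card_div_four_le_norm_sq {d : ℕ} {v : EuclideanSpace ℝ (Fin d)}
    (hv : v - halfVec d ∈ L d) : (d : ℝ) / 4 ≤ ‖v‖ ^ 2 := by
  rw [EuclideanSpace.real_norm_sq_eq]
  calc (d : ℝ) / 4 = ∑ _i : Fin d, (1 / 4 : ℝ) := by simp [div_eq_mul_inv]
    _ ≤ ∑ i, v i ^ 2 := Finset.sum_le_sum fun i _ => by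
      obtain ⟨n, hn⟩ := hv i
      have hvi : v i = n + 1 / 2 := by
        rw [← hn]
        simp [halfVec]
      rw [hvi]
      exact one_div_four_le_sq_int_add_half n

theorem sub_mem_of_dist_le_one {d : ℕ} (hd : 5 ≤ d) {y z : EuclideanSpace ℝ (Fin d)}
    (hy : y ∈ halfIntSet d) (hz : z ∈ halfIntSet d) (h : dist z y ≤ 1) : z - y ∈ L d := by
  refine (sub_mem_or_sub_halfVec_mem hy hz).resolve_right fun hzy => ?_
  have hnorm := card_div_four_le_norm_sq hzy
  rw [← dist_eq_norm] at hnorm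
  have hd' : (5 : ℝ) ≤ d := by exact_mod_cast hd
  nlinarith [dist_nonneg (x := z) (y := y)]

/-- For `X = ℤ^d ∪ ((1/2,…,1/2) + ℤ^d)` with `d ≥ 5` and any `x ∈ X`, the set `M_x`
of `1`-reachable points from `x` (a translate of `ℤ^d`) is full-dimensional — its
affine hull is all of `ℝ^d` — yet `M_x ≠ X`. -/
theorem halfInt_lattice_reachable_full_dimensional_ne (d : ℕ) (hd : 5 ≤ d)
    (x : EuclideanSpace ℝ (Fin d)) (hx : x ∈ halfIntSet d) :
    affineSpan ℝ {y | Reachable d (halfIntSet d) 1 x y} = ⊤ ∧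
      {y | Reachable d (halfIntSet d) 1 x y} ≠ halfIntSet d := by
  set M := {y | Reachable d (halfIntSet d) 1 x y}
  have hM : ∀ y ∈ M, y - x ∈ L d := fun _ hy =>
    Reachable.sub_mem (fun _ hy _ hz => sub_mem_of_dist_le_one hd hy hz) hy
  constructor
  · refine affineSpan_eq_top_of_vadd_basis_mem (EuclideanSpace.basisFun (Fin d) ℝ).toBasis
      (Reachable.refl hx) fun i => ?_
    rw [OrthonormalBasis.coe_toBasis, EuclideanSpace.basisFun_apply, vadd_eq_add, add_comm]
    exact .of_dist_le hx (add_mem_halfIntSet hx (single_one_mem_intLatticeAddSubgroup i))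
      (by simp)
  · intro hMX
    have hmem : x + halfVec d ∈ M := hMX ▸ add_halfVec_mem_halfIntSet hx
    exact halfVec_notMem_intLatticeAddSubgroup (by omega : 0 < d) (by simpa using hM _ hmem)
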